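/- Let S ⊂ P^3 over F_q be the surface defined by X_0X_1^q − X_0^qX_1 + X_2X_3^q − X_2^qX_3 = 0. For any F_q-point P = (a_0:…:a_3) of S (note every F_q-point of P^3 lies on S) and any F_q-point Q = (b_0:…:b_3) satisfying a_1b_0 − a_0b_1 + a_3b_2 − a_2b_3 = 0, the line through P and Q lies entirely on S. -/
import Mathlib


open MvPolynomial

lemma aux_pow_card {Fq : Type*} [Field Fq] [Fintype Fq] (c d : Fq) :
    (C c * X 0 + C d * X 1 : MvPolynomial (Fin 2) Fq) ^ Fintype.card Fq =
      C c * X 0 ^ Fintype.card Fq + C d * X 1 ^ Fintype.card Fq := by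
  set p := ringChar Fq with hpdef
  haveI : Fact p.Prime := ⟨CharP.char_is_prime Fq p⟩
  obtain ⟨n, hn⟩ := FiniteField.card Fq p
  haveI : CharP (MvPolynomial (Fin 2) Fq) p :=
    charP_of_injective_ringHom (C_injective (Fin 2) Fq) p
  rw [hn.2, add_pow_char_pow, mul_pow, mul_pow, ← C_pow, ← C_pow, ← hn.2,
    FiniteField.pow_card, FiniteField.pow_card]

/-- For the surface `X₀X₁^q - X₀^qX₁ + X₂X₃^q - X₂^qX₃ = 0` over `𝔽_q`
(`q = |𝔽_q|`): for any `𝔽_q`-points `a`, `b` of `ℙ³` with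
`a₁b₀ - a₀b₁ + a₃b₂ - a₂b₃ = 0`, the whole line `{λa + μb}` lies on the surface
(as a polynomial identity in `λ, μ`). -/
theorem stmt8 {Fq : Type*} [Field Fq] [Fintype Fq] (a b : Fin 4 → Fq)
    (ha : a ≠ 0) (hb : b ≠ 0)
    (htan : a 1 * b 0 - a 0 * b 1 + a 3 * b 2 - a 2 * b 3 = 0) :
    (C (a 0) * X 0 + C (b 0) * X 1) * (C (a 1) * X 0 + C (b 1) * X 1) ^ Fintype.card Fq -
        (C (a 0) * X 0 + C (b 0) * X 1) ^ Fintype.card Fq * (C (a 1) * X 0 + C (b 1) * X 1) +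
        (C (a 2) * X 0 + C (b 2) * X 1) * (C (a 3) * X 0 + C (b 3) * X 1) ^ Fintype.card Fq -
        (C (a 2) * X 0 + C (b 2) * X 1) ^ Fintype.card Fq * (C (a 3) * X 0 + C (b 3) * X 1) =
      (0 : MvPolynomial (Fin 2) Fq) := by
  rw [aux_pow_card, aux_pow_card, aux_pow_card, aux_pow_card]
  have hC : C (a 1 * b 0 - a 0 * b 1 + a 3 * b 2 - a 2 * b 3) =
      (0 : MvPolynomial (Fin 2) Fq) := by rw [htan, map_zero]
  simp only [map_add, map_sub, map_mul] at hC
  generalize (X 0 : MvPolynomial (Fin 2) Fq) ^ Fintype.card Fq = u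
  generalize (X 1 : MvPolynomial (Fin 2) Fq) ^ Fintype.card Fq = v
  linear_combination (X 1 * u - X 0 * v) * hC
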